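/- Let |Ω_N⟩ = |φ₁⟩⊗…⊗|φ_N⟩ be a product of unit vectors in ℂ^d with all amplitudes c_i(x) nonzero, and suppose Var(log|c_i(x_i)|²) ≤ M for each i. Let P_ε^N be the projection onto the span of product basis vectors (x₁,…,x_N) satisfying |−(1/N) log|c_{x₁…x_N}|² − H_N| > ε, where H_N = −(1/N)∑_i ∑_x |c_i(x)|² log|c_i(x)|². Then ‖P_ε^N |Ω_N⟩‖² ≤ M/(N ε²), and hence ‖P_ε^N |Ω_N⟩‖² → 0 as N → ∞. -/

import Mathlib

/-!
Under the product weight `P x = ∏ i, p i (x i)` the deviation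
`log P x - ∑ i, ∑ y, p i y * log (p i y)` is the sum of the independent centred variables
`log (p i (x i)) - ∑ y, p i y * log (p i y)`. Cross terms vanish in the second moment, so the
variance is additive and at most `N * M`; Chebyshev's inequality at level `N * ε` bounds the
weight of the maverick sequences by `N * M / (N * ε) ^ 2 = M / (N * ε ^ 2)`.
-/

open Finset Filter Real

theorem sum_filter_lt_abs_le {β : Type*} (s : Finset β) {w f : β → ℝ} (hw : ∀ x ∈ s, 0 ≤ w x)
    {a : ℝ} (ha : 0 < a) :
    ∑ x ∈ s with a < |f x|, w x ≤ (∑ x ∈ s, w x * f x ^ 2) / a ^ 2 := by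
  rw [le_div_iff₀ (by positivity), sum_mul]
  calc ∑ x ∈ s with a < |f x|, w x * a ^ 2 ≤ ∑ x ∈ s with a < |f x|, w x * f x ^ 2 := by
        refine sum_le_sum fun x hx => ?_
        rw [mem_filter] at hx
        rw [← sq_abs (f x)]
        gcongr
        exacts [hw x hx.1, hx.2.le]
    _ ≤ ∑ x ∈ s, w x * f x ^ 2 :=
        sum_le_sum_of_subset_of_nonneg (filter_subset _ _) fun x hx _ =>
          mul_nonneg (hw x hx) (sq_nonneg _)

theorem sum_mul_log_sub_sum_mul_log {β : Type*} [Fintype β] {p : β → ℝ} (hp : ∑ y, p y = 1) :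
    ∑ y, p y * (log (p y) - ∑ z, p z * log (p z)) = 0 := by
  simp only [mul_sub, sum_sub_distrib, ← sum_mul, hp, one_mul, sub_self]

section ProductWeights

variable {ι : Type*} {α : ι → Type*} [Fintype ι] [DecidableEq ι]

theorem prod_mulSingle_apply (i : ι) (f : α i → ℝ) (x : ∀ i, α i) :
    ∏ k, Pi.mulSingle (M := fun k => α k → ℝ) i f k (x k) = f (x i) := by
  rw [Fintype.prod_eq_single i fun k hk => by simp [hk]]
  simp

variable [∀ i, Fintype (α i)]

theorem sum_prod_mul_prod (p F : ∀ i, α i → ℝ) :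
    ∑ x : ∀ i, α i, (∏ i, p i (x i)) * ∏ i, F i (x i) = ∏ i, ∑ y, p i y * F i y := by
  simp_rw [← prod_mul_distrib]
  exact (Fintype.prod_sum fun i y => p i y * F i y).symm

theorem sum_prod_mul_apply {p : ∀ i, α i → ℝ} (hp : ∀ i, ∑ y, p i y = 1) (i : ι)
    (f : α i → ℝ) :
    ∑ x : ∀ i, α i, (∏ k, p k (x k)) * f (x i) = ∑ y, p i y * f y := by
  simp_rw [← prod_mulSingle_apply i f, sum_prod_mul_prod]
  rw [Fintype.prod_eq_single i fun k hk => by simp [hk, hp]]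
  simp

theorem sum_prod_mul_apply_mul_apply {p : ∀ i, α i → ℝ} (hp : ∀ i, ∑ y, p i y = 1) {i j : ι}
    (hij : i ≠ j) (f : α i → ℝ) (g : α j → ℝ) :
    ∑ x : ∀ i, α i, (∏ k, p k (x k)) * (f (x i) * g (x j))
      = (∑ y, p i y * f y) * ∑ y, p j y * g y := by
  have h := sum_prod_mul_prod p (Pi.mulSingle i f * Pi.mulSingle j g)
  simp only [Pi.mul_apply, prod_mul_distrib, prod_mulSingle_apply] at h
  rw [h, Fintype.prod_eq_mul i j hij fun k hk => by simp [hk.1, hk.2, hp]]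
  simp [hij, hij.symm]

theorem sum_prod_mul_sum_sq {p : ∀ i, α i → ℝ} (hp : ∀ i, ∑ y, p i y = 1)
    (g : ∀ i, α i → ℝ) (hg : ∀ i, ∑ y, p i y * g i y = 0) :
    ∑ x : ∀ i, α i, (∏ k, p k (x k)) * (∑ i, g i (x i)) ^ 2
      = ∑ i, ∑ y, p i y * g i y ^ 2 := by
  calc _ = ∑ i, ∑ j, ∑ x : ∀ i, α i, (∏ k, p k (x k)) * (g i (x i) * g j (x j)) := by
        simp_rw [sq, sum_mul_sum, mul_sum]
        rw [sum_comm]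
        exact sum_congr rfl fun i _ => sum_comm
    _ = ∑ i, ∑ y, p i y * g i y ^ 2 := by
        refine sum_congr rfl fun i _ => ?_
        rw [sum_eq_single i (fun j _ hji => by simp [sum_prod_mul_apply_mul_apply hp hji.symm, hg])
          (by simp)]
        simp_rw [← sq]
        exact sum_prod_mul_apply hp i (g i · ^ 2)

theorem sum_filter_lt_abs_log_prod_sub_le {p : ∀ i, α i → ℝ} (hp : ∀ i, ∑ y, p i y = 1)
    (hpos : ∀ i y, 0 < p i y) {M : ℝ}
    (hvar : ∀ i, ∑ y, p i y * (log (p i y) - ∑ z, p i z * log (p i z)) ^ 2 ≤ M)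
    {a : ℝ} (ha : 0 < a) :
    ∑ x : ∀ i, α i with a < |log (∏ i, p i (x i)) - ∑ i, ∑ y, p i y * log (p i y)|,
        ∏ i, p i (x i)
      ≤ Fintype.card ι * M / a ^ 2 := by
  set g : ∀ i, α i → ℝ := fun i y => log (p i y) - ∑ z, p i z * log (p i z)
  have hdev : ∀ x : ∀ i, α i,
      log (∏ i, p i (x i)) - ∑ i, ∑ y, p i y * log (p i y) = ∑ i, g i (x i) := fun x => by
    rw [log_prod fun i _ => (hpos i (x i)).ne', ← sum_sub_distrib]
  simp_rw [hdev]
  calc _ ≤ (∑ x : ∀ i, α i, (∏ i, p i (x i)) * (∑ i, g i (x i)) ^ 2) / a ^ 2 :=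
        sum_filter_lt_abs_le _ (fun x _ => prod_nonneg fun i _ => (hpos i (x i)).le) ha
    _ = (∑ i, ∑ y, p i y * g i y ^ 2) / a ^ 2 := by
        rw [sum_prod_mul_sum_sq hp g fun i => sum_mul_log_sub_sum_mul_log (hp i)]
    _ ≤ Fintype.card ι * M / a ^ 2 := by
        gcongr
        simpa using sum_le_sum fun i (_ : i ∈ univ) => hvar i

end ProductWeights

theorem maverick_vanishes_thermodynamic_limit_general (d : ℕ) (c : ℕ → Fin d → ℂ)
    (hunit : ∀ i, ∑ x, ‖c i x‖ ^ 2 = 1) (hne : ∀ i x, c i x ≠ 0)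
    (M : ℝ)
    (hvar : ∀ i : ℕ, ∑ x, ‖c i x‖ ^ 2 *
        (Real.log (‖c i x‖ ^ 2)
          - ∑ y, ‖c i y‖ ^ 2 * Real.log (‖c i y‖ ^ 2)) ^ 2 ≤ M)
    (ε : ℝ) (hε : 0 < ε) :
    (∀ N : ℕ, 1 ≤ N →
      ∑ x ∈ Finset.univ.filter (fun x : Fin N → Fin d =>
          ε < |-(1 / (N : ℝ)) * Real.log (∏ i : Fin N, ‖c i.1 (x i)‖ ^ 2)
              - (-(1 / (N : ℝ)) * ∑ i : Fin N, ∑ y,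
                  ‖c i.1 y‖ ^ 2 * Real.log (‖c i.1 y‖ ^ 2))|),
          ∏ i : Fin N, ‖c i.1 (x i)‖ ^ 2
        ≤ M / (N * ε ^ 2)) ∧
    Tendsto (fun N : ℕ =>
      ∑ x ∈ Finset.univ.filter (fun x : Fin N → Fin d =>
          ε < |-(1 / (N : ℝ)) * Real.log (∏ i : Fin N, ‖c i.1 (x i)‖ ^ 2)
              - (-(1 / (N : ℝ)) * ∑ i : Fin N, ∑ y,
                  ‖c i.1 y‖ ^ 2 * Real.log (‖c i.1 y‖ ^ 2))|),
          ∏ i : Fin N, ‖c i.1 (x i)‖ ^ 2)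
      atTop (nhds 0) := by
  have bound : ∀ N : ℕ, 1 ≤ N →
      ∑ x ∈ Finset.univ.filter (fun x : Fin N → Fin d =>
          ε < |-(1 / (N : ℝ)) * Real.log (∏ i : Fin N, ‖c i.1 (x i)‖ ^ 2)
              - (-(1 / (N : ℝ)) * ∑ i : Fin N, ∑ y,
                  ‖c i.1 y‖ ^ 2 * Real.log (‖c i.1 y‖ ^ 2))|),
          ∏ i : Fin N, ‖c i.1 (x i)‖ ^ 2
        ≤ M / (N * ε ^ 2) := by
    intro N hN1
    have hN : (0 : ℝ) < N := by exact_mod_cast hN1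
    have key := sum_filter_lt_abs_log_prod_sub_le (p := fun (i : Fin N) y => ‖c i y‖ ^ 2)
      (fun i => hunit i) (fun i y => pow_pos (norm_pos_iff.2 (hne i y)) 2) (fun i => hvar i)
      (mul_pos hN hε)
    refine (sum_congr (filter_congr fun x _ => ?_) fun _ _ => rfl).trans_le (key.trans_eq ?_)
    · rw [← mul_sub, abs_mul, abs_neg, abs_of_pos (by positivity), one_div, inv_mul_eq_div,
        lt_div_iff₀ hN, mul_comm]
    · rw [Fintype.card_fin]
      field_simp
  refine ⟨bound, squeeze_zero' (Eventually.of_forall fun N => ?_)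
    ((eventually_ge_atTop 1).mono bound) ?_⟩
  · exact sum_nonneg fun x _ => prod_nonneg fun i _ => by positivity
  · simp_rw [mul_comm (_ : ℝ) (ε ^ 2), ← div_div]
    exact tendsto_const_div_atTop_nhds_zero_nat _

/-- Main theorem: for a universe of `N` subsystems in an arbitrary product
state with uniformly bounded single-factor variances of `log|cᵢ|²`, the
squared norm of the maverick (non-typical) component is at most `M/(Nε²)`,
and hence tends to `0` as `N → ∞`. -/
theorem maverick_vanishes_thermodynamic_limit (d : ℕ) (c : ℕ → Fin d → ℂ)
    (hunit : ∀ i, ∑ x, ‖c i x‖ ^ 2 = 1) (hne : ∀ i x, c i x ≠ 0)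
    (M : ℝ) (hM : 0 < M)
    (hvar : ∀ i : ℕ, ∑ x, ‖c i x‖ ^ 2 *
        (Real.log (‖c i x‖ ^ 2)
          - ∑ y, ‖c i y‖ ^ 2 * Real.log (‖c i y‖ ^ 2)) ^ 2 ≤ M)
    (ε : ℝ) (hε : 0 < ε) :
    (∀ N : ℕ, 1 ≤ N →
      ∑ x ∈ Finset.univ.filter (fun x : Fin N → Fin d =>
          ε < |-(1 / (N : ℝ)) * Real.log (∏ i : Fin N, ‖c i.1 (x i)‖ ^ 2)
              - (-(1 / (N : ℝ)) * ∑ i : Fin N, ∑ y,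
                  ‖c i.1 y‖ ^ 2 * Real.log (‖c i.1 y‖ ^ 2))|),
          ∏ i : Fin N, ‖c i.1 (x i)‖ ^ 2
        ≤ M / (N * ε ^ 2)) ∧
    Tendsto (fun N : ℕ =>
      ∑ x ∈ Finset.univ.filter (fun x : Fin N → Fin d =>
          ε < |-(1 / (N : ℝ)) * Real.log (∏ i : Fin N, ‖c i.1 (x i)‖ ^ 2)
              - (-(1 / (N : ℝ)) * ∑ i : Fin N, ∑ y,
                  ‖c i.1 y‖ ^ 2 * Real.log (‖c i.1 y‖ ^ 2))|),
          ∏ i : Fin N, ‖c i.1 (x i)‖ ^ 2)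
      atTop (nhds 0) :=
  maverick_vanishes_thermodynamic_limit_general d c hunit hne M hvar ε hε
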